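/- Let r_k, r'_k ∈ Δ^{n_k} for k = 1,…,m. Then, with respect to the metric induced by the ℓ¹-norm on ℝ^{n_1×⋯×n_m}, the Hausdorff distance between the sets B(r'_1,…,r'_m) and B(r_1,…,r_m) is at most 2 Σ_{k=1}^m ||r_k − r'_k||_1. -/

import Mathlib

open Finset

namespace MOT

/-- The index set of a tensor with mode sizes `n 0, …, n (m-1)`. -/
abbrev Idx {m : ℕ} (n : Fin m → ℕ) := ∀ k : Fin m, Fin (n k)

/-- A real tensor of order `m` with mode sizes `n k`. -/
abbrev Tensor {m : ℕ} (n : Fin m → ℕ) := Idx n → ℝ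

/-- The `k`-th marginal of a tensor: `(r_k(X))_j = ∑_{I : i_k = j} X_I`. -/
noncomputable def marginal {m : ℕ} {n : Fin m → ℕ} (X : Tensor n) (k : Fin m)
    (j : Fin (n k)) : ℝ :=
  ∑ I : Idx n, if I k = j then X I else 0

/-- The entrywise ℓ¹-norm of a tensor. -/
noncomputable def tnorm1 {m : ℕ} {n : Fin m → ℕ} (X : Tensor n) : ℝ :=
  ∑ I : Idx n, |X I|

/-- The uniform norm (maximum absolute entry) of a real-valued family. -/
noncomputable def supAbs {ι : Type*} (X : ι → ℝ) : ℝ := ⨆ i, |X i|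

/-- The ℓ¹-norm of a vector. -/
noncomputable def vnorm1 {N : ℕ} (v : Fin N → ℝ) : ℝ := ∑ j, |v j|

/-- The Euclidean norm of a vector. -/
noncomputable def vnorm2 {N : ℕ} (v : Fin N → ℝ) : ℝ := Real.sqrt (∑ j, v j ^ 2)

/-- The Euclidean inner product of two vectors. -/
noncomputable def vinner {N : ℕ} (v w : Fin N → ℝ) : ℝ := ∑ j, v j * w j

/-- `v ∈ Δ^N`: entrywise strictly positive with entries summing to 1. -/
def IsSimplex {N : ℕ} (v : Fin N → ℝ) : Prop := (∀ j, 0 < v j) ∧ ∑ j, v j = 1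

/-- `P ∈ B(r_1,…,r_m)`: entrywise nonnegative with prescribed marginals. -/
def Feasible {m : ℕ} {n : Fin m → ℕ} (r : ∀ k : Fin m, Fin (n k) → ℝ)
    (P : Tensor n) : Prop :=
  (∀ I, 0 ≤ P I) ∧ ∀ k j, marginal P k j = r k j

/-- The entropy `H(P) = -∑_I P_I log P_I` (with `0 · log 0 = 0`). -/
noncomputable def entropy {m : ℕ} {n : Fin m → ℕ} (P : Tensor n) : ℝ :=
  -∑ I : Idx n, P I * Real.log (P I)

/-- The inner product `⟨X, Y⟩ = ∑_I X_I Y_I` of two tensors. -/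
noncomputable def tinner {m : ℕ} {n : Fin m → ℕ} (X Y : Tensor n) : ℝ :=
  ∑ I : Idx n, X I * Y I

/-- The entropic transport cost `V_C^η(P) = ⟨C, P⟩ − η H(P)`. -/
noncomputable def entCost {m : ℕ} {n : Fin m → ℕ} (C : Tensor n) (η : ℝ)
    (P : Tensor n) : ℝ :=
  tinner C P - η * entropy P

/-- `P` is a positive diagonal scaling of `K`. -/
def IsScaling {m : ℕ} {n : Fin m → ℕ} (K P : Tensor n) : Prop :=
  ∃ β : ∀ k : Fin m, Fin (n k) → ℝ, ∀ I, P I = K I * ∏ k, Real.exp (β k (I k))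

end MOT
namespace MOT

/-- The transport polytope `B(r_1,…,r_m)` as a subset of the tensor space equipped with the
ℓ¹-norm (realized as `PiLp 1`). -/
noncomputable def BSet {m : ℕ} {n : Fin m → ℕ} (r : ∀ k : Fin m, Fin (n k) → ℝ) :
    Set (PiLp 1 (fun _ : Idx n => ℝ)) :=
  {P | Feasible r ((WithLp.equiv 1 (Idx n → ℝ)) P)}

/-! Damp `P ∈ B(r')` entrywise by the factor `∏ₖ gₖ(iₖ)`, `gₖ = min(rₖ, r'ₖ) / r'ₖ ∈ [0, 1]`.
The damped tensor `X` has marginals below `r`, and by `1 - ∏ g ≤ ∑ (1 - g)` it has lost mass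
`D ≤ ∑ₖ ‖rₖ - r'ₖ‖₁`. The deficits `eₖ = rₖ - rₖ(X) ≥ 0` all have mass `D`, so adding their
product coupling `(⊗ₖ eₖ) / D^(m-1)` gives `Q ∈ B(r)` with `Q ≥ X`, and
`‖P - Q‖₁ ≤ ‖P - X‖₁ + ‖Q - X‖₁ = 2D`. -/

section Marginals

variable {m : ℕ} {n : Fin m → ℕ}

lemma sum_mul_marginal (X : Tensor n) (k : Fin m) (c : Fin (n k) → ℝ) :
    ∑ j, c j * marginal X k j = ∑ I : Idx n, c (I k) * X I := by
  simp only [marginal, mul_sum, mul_ite, mul_zero]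
  rw [sum_comm]
  simp

lemma sum_marginal (X : Tensor n) (k : Fin m) :
    ∑ j, marginal X k j = ∑ I : Idx n, X I := by
  simpa using sum_mul_marginal X k 1

lemma marginal_add (X Y : Tensor n) (k : Fin m) (j : Fin (n k)) :
    marginal (X + Y) k j = marginal X k j + marginal Y k j := by
  simp only [marginal, ← sum_add_distrib]
  exact sum_congr rfl fun I _ => by split_ifs <;> simp

lemma marginal_div_const (X : Tensor n) (c : ℝ) (k : Fin m) (j : Fin (n k)) :
    marginal (fun I => X I / c) k j = marginal X k j / c := by
  simp only [marginal, sum_div]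
  exact sum_congr rfl fun I _ => by split_ifs <;> simp

lemma marginal_prod (h : ∀ k, Fin (n k) → ℝ) (k : Fin m) (j : Fin (n k)) :
    marginal (fun I => ∏ l, h l (I l)) k j = h k j * ∏ l ∈ univ.erase k, ∑ j', h l j' := by
  classical
  let t : ∀ l, Finset (Fin (n l)) := Function.update (fun _ => univ) k {j}
  calc marginal (fun I => ∏ l, h l (I l)) k j
      = ∑ I ∈ Fintype.piFinset t, ∏ l, h l (I l) := by
        rw [Fintype.piFinset_update_singleton_eq_filter_piFinset_eq (fun _ => univ) k
          (mem_univ j)]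
        simp only [Fintype.piFinset_univ, sum_filter, marginal]
    _ = ∏ l, ∑ j' ∈ t l, h l j' := (prod_univ_sum t h).symm
    _ = h k j * ∏ l ∈ univ.erase k, ∑ j', h l j' := by
        rw [← mul_prod_erase _ _ (mem_univ k)]
        congr 1
        · simp [t]
        · exact prod_congr rfl fun l hl => by simp [t, ne_of_mem_erase hl]

lemma Feasible.sum_eq {r : ∀ k, Fin (n k) → ℝ} {P : Tensor n} (hP : Feasible r P) (k : Fin m) :
    ∑ I, P I = ∑ j, r k j := by
  simp only [← sum_marginal P k, hP.2]

lemma marginal_prod_div_pow {e : ∀ k, Fin (n k) → ℝ} {D : ℝ} (he0 : ∀ k j, 0 ≤ e k j)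
    (he : ∀ k, ∑ j, e k j = D) (k : Fin m) (j : Fin (n k)) :
    marginal (fun I => (∏ l, e l (I l)) / D ^ (m - 1)) k j = e k j := by
  rw [marginal_div_const, marginal_prod, prod_congr rfl fun l _ => he l, prod_const,
    card_erase_of_mem (mem_univ k), card_univ, Fintype.card_fin]
  -- if `D ^ (m - 1) = 0` then `D = 0`, so `e = 0` and the junk value `x / 0 = 0` is harmless
  rcases eq_or_ne (D ^ (m - 1)) 0 with hD | hD
  · have hek : e k j = 0 := (sum_eq_zero_iff_of_nonneg fun j _ => he0 k j).1
      ((he k).trans (eq_zero_of_pow_eq_zero hD)) j (mem_univ j)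
    simp [hek]
  · exact mul_div_cancel_right₀ _ hD

theorem exists_feasible_ge_of_marginal_le {r : ∀ k, Fin (n k) → ℝ} {c : ℝ}
    (hr : ∀ k, ∑ j, r k j = c) {X : Tensor n} (hX0 : ∀ I, 0 ≤ X I)
    (hX : ∀ k j, marginal X k j ≤ r k j) :
    ∃ Q, Feasible r Q ∧ ∀ I, X I ≤ Q I := by
  set e : ∀ k, Fin (n k) → ℝ := fun k j => r k j - marginal X k j
  set D := c - ∑ I, X I
  have he0 : ∀ k j, 0 ≤ e k j := fun k j => sub_nonneg.2 (hX k j)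
  have he : ∀ k, ∑ j, e k j = D := fun k => by
    simp only [e, D, sum_sub_distrib, hr, sum_marginal]
  have hD : 0 ≤ D ^ (m - 1) := by
    rcases Nat.eq_zero_or_pos m with hm | hm
    · simp [hm]
    · exact pow_nonneg (he ⟨0, hm⟩ ▸ sum_nonneg fun j _ => he0 _ j) _
  set T : Tensor n := fun I => (∏ l, e l (I l)) / D ^ (m - 1)
  have hT0 : ∀ I, 0 ≤ T I := fun I => div_nonneg (prod_nonneg fun l _ => he0 l (I l)) hD
  refine ⟨X + T, ⟨fun I => add_nonneg (hX0 I) (hT0 I), fun k j => ?_⟩,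
    fun I => le_add_of_nonneg_right (hT0 I)⟩
  rw [marginal_add, marginal_prod_div_pow he0 he]
  ring

end Marginals

theorem one_sub_prod_le_sum_one_sub {ι : Type*} (s : Finset ι) {g : ι → ℝ}
    (h0 : ∀ i ∈ s, 0 ≤ g i) (h1 : ∀ i ∈ s, g i ≤ 1) :
    1 - ∏ i ∈ s, g i ≤ ∑ i ∈ s, (1 - g i) := by
  classical
  induction s using Finset.induction_on with
  | empty => simp
  | insert a s ha ih =>
    rw [prod_insert ha, sum_insert ha]
    have h0' : ∀ i ∈ s, 0 ≤ g i := fun i hi => h0 i (mem_insert_of_mem hi)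
    have h1' : ∀ i ∈ s, g i ≤ 1 := fun i hi => h1 i (mem_insert_of_mem hi)
    have hs : ∏ i ∈ s, g i ≤ 1 := prod_le_one h0' h1'
    nlinarith [ih h0' h1', h0 a (mem_insert_self a s), h1 a (mem_insert_self a s)]

section Damping

variable {m : ℕ} {n : Fin m → ℕ} {P : Tensor n} {g : ∀ k, Fin (n k) → ℝ}

lemma marginal_mul_prod_le (hP : ∀ I, 0 ≤ P I) (hg0 : ∀ k j, 0 ≤ g k j)
    (hg1 : ∀ k j, g k j ≤ 1) (k : Fin m) (j : Fin (n k)) :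
    marginal (fun I => P I * ∏ l, g l (I l)) k j ≤ g k j * marginal P k j := by
  simp only [marginal, mul_sum, mul_ite, mul_zero]
  refine sum_le_sum fun I _ => ?_
  split_ifs with hI
  · have hprod : ∏ l, g l (I l) ≤ g k (I k) := by
      rw [← mul_prod_erase univ (fun l => g l (I l)) (mem_univ k)]
      exact mul_le_of_le_one_right (hg0 k (I k))
        (prod_le_one (fun l _ => hg0 l (I l)) fun l _ => hg1 l (I l))
    calc P I * ∏ l, g l (I l) ≤ P I * g k (I k) :=
          mul_le_mul_of_nonneg_left hprod (hP I)
      _ = g k j * P I := by rw [hI, mul_comm]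
  · rfl

lemma sum_sub_mul_prod_le (hP : ∀ I, 0 ≤ P I) (hg0 : ∀ k j, 0 ≤ g k j)
    (hg1 : ∀ k j, g k j ≤ 1) :
    ∑ I, (P I - P I * ∏ l, g l (I l)) ≤ ∑ k, ∑ j, (1 - g k j) * marginal P k j := by
  simp only [sum_mul_marginal]
  rw [sum_comm]
  refine sum_le_sum fun I _ => ?_
  calc P I - P I * ∏ l, g l (I l) = P I * (1 - ∏ l, g l (I l)) := by ring
    _ ≤ P I * ∑ k, (1 - g k (I k)) := mul_le_mul_of_nonneg_left
        (one_sub_prod_le_sum_one_sub _ (fun l _ => hg0 l (I l)) fun l _ => hg1 l (I l)) (hP I)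
    _ = ∑ k, (1 - g k (I k)) * P I := by rw [mul_sum]; simp only [mul_comm]

end Damping

lemma sub_min_le_abs_sub (a b : ℝ) : b - min a b ≤ |a - b| := by
  rcases le_total a b with h | h
  · rw [min_eq_left h, abs_sub_comm]
    exact le_abs_self _
  · simp [min_eq_right h]

theorem exists_feasible_sum_abs_sub_le {m : ℕ} (hm : 0 < m) {n : Fin m → ℕ}
    {r r' : ∀ k, Fin (n k) → ℝ} (hr : ∀ k, IsSimplex (r k)) (hr' : ∀ k, IsSimplex (r' k))
    {P : Tensor n} (hP : Feasible r' P) :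
    ∃ Q, Feasible r Q ∧ ∑ I, |P I - Q I| ≤ 2 * ∑ k, vnorm1 (fun j => r k j - r' k j) := by
  have ⟨hP0, hPr'⟩ := hP
  set g : ∀ k, Fin (n k) → ℝ := fun k j => min (r k j) (r' k j) / r' k j
  have hg0 : ∀ k j, 0 ≤ g k j := fun k j =>
    div_nonneg (le_min ((hr k).1 j).le ((hr' k).1 j).le) ((hr' k).1 j).le
  have hg1 : ∀ k j, g k j ≤ 1 := fun k j => (div_le_one ((hr' k).1 j)).2 (min_le_right _ _)
  have hgr' : ∀ k j, g k j * r' k j = min (r k j) (r' k j) := fun k j =>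
    div_mul_cancel₀ _ ((hr' k).1 j).ne'
  set X : Tensor n := fun I => P I * ∏ l, g l (I l)
  have hX0 : ∀ I, 0 ≤ X I := fun I => mul_nonneg (hP0 I) (prod_nonneg fun l _ => hg0 l (I l))
  have hXP : ∀ I, X I ≤ P I := fun I =>
    mul_le_of_le_one_right (hP0 I) (prod_le_one (fun l _ => hg0 l (I l)) fun l _ => hg1 l (I l))
  have hXr : ∀ k j, marginal X k j ≤ r k j := fun k j =>
    (marginal_mul_prod_le hP0 hg0 hg1 k j).trans (by rw [hPr', hgr']; exact min_le_left _ _)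
  obtain ⟨Q, hQ, hXQ⟩ := exists_feasible_ge_of_marginal_le (fun k => (hr k).2) hX0 hXr
  have hdefect : ∑ I, (P I - X I) ≤ ∑ k, vnorm1 (fun j => r k j - r' k j) :=
    (sum_sub_mul_prod_le hP0 hg0 hg1).trans <| sum_le_sum fun k _ => sum_le_sum fun j _ => by
      rw [hPr', sub_mul, one_mul, hgr']
      exact sub_min_le_abs_sub _ _
  have hmass : ∑ I, Q I = ∑ I, P I := by
    rw [hQ.sum_eq ⟨0, hm⟩, hP.sum_eq ⟨0, hm⟩, (hr _).2, (hr' _).2]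
  refine ⟨Q, hQ, ?_⟩
  calc ∑ I, |P I - Q I| ≤ ∑ I, ((P I - X I) + (Q I - X I)) := sum_le_sum fun I _ =>
        abs_sub_le_iff.2 ⟨by linarith [hXQ I], by linarith [hXP I]⟩
    _ = 2 * ∑ I, (P I - X I) := by simp only [sum_add_distrib, sum_sub_distrib, hmass]; ring
    _ ≤ 2 * ∑ k, vnorm1 (fun j => r k j - r' k j) := by linarith

theorem exists_mem_BSet_dist_le {m : ℕ} (hm : 0 < m) {n : Fin m → ℕ}
    {r r' : ∀ k, Fin (n k) → ℝ} (hr : ∀ k, IsSimplex (r k)) (hr' : ∀ k, IsSimplex (r' k))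
    {P : PiLp 1 (fun _ : Idx n => ℝ)} (hP : P ∈ BSet r') :
    ∃ Q ∈ BSet r, dist P Q ≤ 2 * ∑ k, vnorm1 (fun j => r k j - r' k j) := by
  obtain ⟨Q, hQ, hPQ⟩ := exists_feasible_sum_abs_sub_le hm hr hr' hP
  refine ⟨WithLp.toLp 1 Q, hQ, ?_⟩
  simpa [PiLp.dist_eq_of_L1, Real.dist_eq] using hPQ

/-- Hausdorff distance bound used in the proof of Theorem
`thm:LowRankError`: with respect to the metric induced by the ℓ¹-norm,
`d_H(B(r'_1,…,r'_m), B(r_1,…,r_m)) ≤ 2 ∑_k ‖r_k − r'_k‖₁`. -/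
theorem hausdorffDist_transport_polytopes
    {m : ℕ} (hm : 2 ≤ m) {n : Fin m → ℕ}
    (r r' : ∀ k : Fin m, Fin (n k) → ℝ)
    (hr : ∀ k, IsSimplex (r k)) (hr' : ∀ k, IsSimplex (r' k)) :
    Metric.hausdorffDist (BSet r') (BSet r) ≤
      2 * ∑ k, vnorm1 (fun j => r k j - r' k j) := by
  have hm0 : 0 < m := by omega
  have hsymm : ∑ k, vnorm1 (fun j => r' k j - r k j) =
      ∑ k, vnorm1 (fun j => r k j - r' k j) := by
    simp only [vnorm1, abs_sub_comm]
  refine Metric.hausdorffDist_le_of_mem_dist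
    (mul_nonneg zero_le_two (sum_nonneg fun k _ => sum_nonneg fun j _ => abs_nonneg _))
    (fun P hP => exists_mem_BSet_dist_le hm0 hr hr' hP) fun Q hQ => ?_
  obtain ⟨P, hP, hQP⟩ := exists_mem_BSet_dist_le hm0 hr' hr hQ
  exact ⟨P, hP, hQP.trans_eq (by rw [hsymm])⟩

end MOT
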